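/- Assume μ̂_t is square-integrable with E[μ̂_t] = μ_t and Var[μ̂_t] = σ_t²/n; assume σ̂_t² is square-integrable with E[σ̂_t²] = ((n−1)/n)·σ_t² and Var[σ̂_t²] = (2(n−1)/n²)·σ_t⁴; and assume σ̂_t² ≥ q·σ_t²/n almost surely for some real q > 0. Then the expected squared Wasserstein-2 distance is bounded from above by E[W₂²] ≤ U(N,n,q), where U(N,n,q) = L(N,n) + σ_t⁵·((n−1)/(2·(N+n)²))·((N/(N+n))·σ_s² + (q/(N+n))·σ_t²)^(−3/2) and L(N,n) = (σ_t − √((N/(N+n))·σ_s² + ((n−1)/(N+n))·σ_t²))² + (N/(N+n))²·(μ_t − μ_s)² + (n/(N+n)²)·σ_t². -/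

import Mathlib

open MeasureTheory ProbabilityTheory Real

/-!
Hölder's defect formula for the concave square root, `√x ≥ √m + (x - m) / (2√m) - (x - m)² / (8 c^{3/2})`
whenever `x, m ≥ c > 0`, is integrated at `x = σ̄²`, `m = E σ̄²`, with `c` the almost-sure floor of `σ̄²`
coming from the chi-square quantile. This gives `E √σ̄² ≥ √(E σ̄²) - Var σ̄² / (8 c^{3/2})`. The other terms
of `E W₂²` are means and variances of the affine images `σ̄²` of `σ̂_t²` and `μ̄` of `μ̂_t`
(bias–variance decomposition).
-/

theorem Real.sqrt_tangent_sub_sq_div_le_sqrt {c m x : ℝ} (hc : 0 < c) (hm : c ≤ m) (hx : c ≤ x) :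
    √m + (x - m) / (2 * √m) - (x - m) ^ 2 / (8 * √c ^ 3) ≤ √x := by
  have hu : 0 < √c := sqrt_pos.2 hc
  have hut : √c ≤ √m := sqrt_le_sqrt hm
  have hus : √c ≤ √x := sqrt_le_sqrt hx
  have ht : 0 < √m := hu.trans_le hut
  have hdefect : √m + (x - m) / (2 * √m) - √x = (√x - √m) ^ 2 / (2 * √m) := by
    rw [eq_div_iff (by positivity)]
    field_simp
    nlinarith [sq_sqrt (hc.le.trans hx), sq_sqrt (hc.le.trans hm)]
  have hcube : 8 * √c ^ 3 ≤ 2 * √m * (√x + √m) ^ 2 :=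
    calc 8 * √c ^ 3 = 2 * √c * (2 * √c) ^ 2 := by ring
      _ ≤ 2 * √m * (√x + √m) ^ 2 := by gcongr; linarith
  have hsq : (x - m) ^ 2 = (√x - √m) ^ 2 * (√x + √m) ^ 2 := by
    linear_combination (-(x - m + √x ^ 2 - √m ^ 2)) * sq_sqrt (hc.le.trans hx)
      + (x - m + √x ^ 2 - √m ^ 2) * sq_sqrt (hc.le.trans hm)
  have hdefect_le : (√x - √m) ^ 2 / (2 * √m) ≤ (x - m) ^ 2 / (8 * √c ^ 3) := by
    rw [hsq, div_le_div_iff₀ (by positivity) (by positivity)]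
    nlinarith [mul_le_mul_of_nonneg_left hcube (sq_nonneg (√x - √m))]
  linarith

theorem MeasureTheory.Integrable.sqrt {Ω : Type*} [MeasurableSpace Ω] {μ : Measure Ω}
    [IsFiniteMeasure μ] {X : Ω → ℝ} (hX : Integrable X μ) : Integrable (fun ω ↦ √(X ω)) μ := by
  refine ((integrable_const 1).add hX.abs).mono'
    (continuous_sqrt.comp_aestronglyMeasurable hX.aestronglyMeasurable) (ae_of_all _ fun ω ↦ ?_)
  rw [Pi.add_apply, norm_of_nonneg (sqrt_nonneg _), sqrt_le_iff]
  constructor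
  · positivity
  · nlinarith [abs_nonneg (X ω), le_abs_self (X ω)]

section Probability

variable {Ω : Type*} [MeasurableSpace Ω] {μ : Measure Ω} [IsProbabilityMeasure μ]

theorem integral_sub_sq_eq_variance_add {Y : Ω → ℝ} (hY : MemLp Y 2 μ) (y : ℝ) :
    ∫ ω, (Y ω - y) ^ 2 ∂μ = Var[Y; μ] + (μ[Y] - y) ^ 2 := by
  have h := variance_eq_sub (show MemLp (fun ω ↦ Y ω - y) 2 μ from hY.sub (memLp_const y))
  rw [variance_sub_const hY.aestronglyMeasurable,
    integral_sub (hY.integrable one_le_two) (integrable_const y), integral_const, probReal_univ,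
    one_smul] at h
  simp only [Pi.pow_apply] at h
  linarith

theorem integral_const_add_mul {Y : Ω → ℝ} (hY : Integrable Y μ) (a b : ℝ) :
    ∫ ω, (a + b * Y ω) ∂μ = a + b * μ[Y] := by
  rw [integral_add (integrable_const a) (hY.const_mul b), integral_const_mul, integral_const,
    probReal_univ, one_smul]

theorem variance_const_add_mul {Y : Ω → ℝ} (hY : AEStronglyMeasurable Y μ) (a b : ℝ) :
    Var[fun ω ↦ a + b * Y ω; μ] = b ^ 2 * Var[Y; μ] := by
  rw [variance_const_add (hY.const_mul b), variance_const_mul]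

theorem sqrt_integral_sub_variance_le_integral_sqrt {X : Ω → ℝ} {c : ℝ} (hX : MemLp X 2 μ)
    (hc : 0 < c) (hXc : ∀ᵐ ω ∂μ, c ≤ X ω) :
    √(μ[X]) - Var[X; μ] * c ^ (-(3 : ℝ) / 2) / 8 ≤ ∫ ω, √(X ω) ∂μ := by
  set m := μ[X]
  have hX1 : Integrable X μ := hX.integrable one_le_two
  have hcm : c ≤ m := by
    simpa using integral_mono_ae (integrable_const c) hX1 hXc
  have hrpow : c ^ (-(3 : ℝ) / 2) = (√c ^ 3)⁻¹ := by
    rw [sqrt_eq_rpow, ← rpow_natCast, ← rpow_mul hc.le, ← rpow_neg hc.le]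
    norm_num
  have hcentered : ∫ ω, (X ω - m) ∂μ = 0 := by
    rw [integral_sub hX1 (integrable_const m), integral_const, probReal_univ, one_smul, sub_self]
  have hvar : ∫ ω, (X ω - m) ^ 2 ∂μ = Var[X; μ] := by
    rw [integral_sub_sq_eq_variance_add hX, sub_self, zero_pow two_ne_zero, add_zero]
  have hlin : Integrable (fun ω ↦ X ω - m) μ := hX1.sub (integrable_const m)
  have hquad : Integrable (fun ω ↦ (X ω - m) ^ 2) μ := (hX.sub (memLp_const m)).integrable_sq
  have htangent : Integrable (fun ω ↦ √m + (X ω - m) / (2 * √m)) μ :=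
    (integrable_const _).add (hlin.div_const _)
  calc √m - Var[X; μ] * c ^ (-(3 : ℝ) / 2) / 8
      = ∫ ω, (√m + (X ω - m) / (2 * √m) - (X ω - m) ^ 2 / (8 * √c ^ 3)) ∂μ := by
        rw [integral_sub htangent (hquad.div_const _),
          integral_add (integrable_const _) (hlin.div_const _),
          integral_div, integral_div, hcentered, hvar, integral_const, probReal_univ, one_smul,
          hrpow]
        ring
    _ ≤ ∫ ω, √(X ω) ∂μ :=
        integral_mono_ae (htangent.sub (hquad.div_const _)) hX1.sqrt
          (hXc.mono fun ω h ↦ sqrt_tangent_sub_sq_div_le_sqrt hc hcm h)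

theorem integral_gaussian_wasserstein_sq_le {S M : Ω → ℝ} {σ c y : ℝ} (hσ : 0 ≤ σ) (hc : 0 < c)
    (hS : MemLp S 2 μ) (hM : MemLp M 2 μ) (hSc : ∀ᵐ ω ∂μ, c ≤ S ω) :
    ∫ ω, (σ ^ 2 + S ω - 2 * √(S ω) * σ + (M ω - y) ^ 2) ∂μ
      ≤ (σ - √(μ[S])) ^ 2 + (μ[M] - y) ^ 2 + Var[M; μ]
        + σ * Var[S; μ] * c ^ (-(3 : ℝ) / 2) / 4 := by
  have hS1 : Integrable S μ := hS.integrable one_le_two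
  have hmean : 0 ≤ μ[S] := integral_nonneg_of_ae (hSc.mono fun ω h ↦ hc.le.trans h)
  have hsqrt := sqrt_integral_sub_variance_le_integral_sqrt hS hc hSc
  have hlin : Integrable (fun ω ↦ σ ^ 2 + S ω) μ := (integrable_const _).add hS1
  have hroot : Integrable (fun ω ↦ 2 * √(S ω) * σ) μ := (hS1.sqrt.const_mul 2).mul_const σ
  have hsq : Integrable (fun ω ↦ (M ω - y) ^ 2) μ := (hM.sub (memLp_const y)).integrable_sq
  have hdiff : Integrable (fun ω ↦ σ ^ 2 + S ω - 2 * √(S ω) * σ) μ := hlin.sub hroot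
  rw [integral_add hdiff hsq, integral_sub hlin hroot,
    integral_add (integrable_const _) hS1, integral_const, probReal_univ, one_smul,
    integral_mul_const, integral_const_mul, integral_sub_sq_eq_variance_add hM]
  nlinarith [mul_le_mul_of_nonneg_left hsqrt hσ, sq_sqrt hmean]

end Probability

theorem wasserstein_expected_upper_bound_general
    {Ω : Type*} [MeasureSpace Ω] [IsProbabilityMeasure (ℙ : Measure Ω)]
    (μs μt σs σt N q : ℝ) (n : ℕ)
    (hσt : 0 < σt) (hn : 2 ≤ n) (hN : 0 ≤ N) (hq : 0 < q)
    (μthat σt2hat : Ω → ℝ)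
    (hμL2 : MemLp μthat 2 ℙ)
    (hμmean : ∫ ω, μthat ω = μt)
    (hμvar : variance μthat ℙ = σt ^ 2 / n)
    (hσL2 : MemLp σt2hat 2 ℙ)
    (hσmean : ∫ ω, σt2hat ω = (((n : ℝ) - 1) / n) * σt ^ 2)
    (hσvar : variance σt2hat ℙ = (2 * ((n : ℝ) - 1) / (n : ℝ) ^ 2) * σt ^ 4)
    (hσlb : ∀ᵐ ω ∂(ℙ : Measure Ω), q * σt ^ 2 / n ≤ σt2hat ω) :
    ∫ ω,
        (σt ^ 2 + (N / (N + n) * σs ^ 2 + (n : ℝ) / (N + n) * σt2hat ω)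
          - 2 * Real.sqrt (N / (N + n) * σs ^ 2 + (n : ℝ) / (N + n) * σt2hat ω) * σt
          + ((N / (N + n) * μs + (n : ℝ) / (N + n) * μthat ω) - μt) ^ 2)
      ≤ (σt - Real.sqrt (N / (N + n) * σs ^ 2 + ((n : ℝ) - 1) / (N + n) * σt ^ 2)) ^ 2
          + (N / (N + n)) ^ 2 * (μt - μs) ^ 2 + (n : ℝ) / (N + n) ^ 2 * σt ^ 2
        + σt ^ 5 * (((n : ℝ) - 1) / (2 * (N + n) ^ 2))
          * (N / (N + n) * σs ^ 2 + q / (N + n) * σt ^ 2) ^ (-(3 : ℝ) / 2) := by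
  have hn' : (2 : ℝ) ≤ n := by exact_mod_cast hn
  have hn0 : (0 : ℝ) < n := by linarith
  have hD : 0 < N + n := by linarith
  have hσbar_floor : ∀ᵐ ω, N / (N + n) * σs ^ 2 + q / (N + n) * σt ^ 2
      ≤ N / (N + n) * σs ^ 2 + (n : ℝ) / (N + n) * σt2hat ω := hσlb.mono fun ω h ↦ by
    have hsplit : q / (N + n) * σt ^ 2 = (n : ℝ) / (N + n) * (q * σt ^ 2 / n) := by field_simp
    rw [hsplit]
    gcongr
  have hmean : ∫ ω, (N / (N + n) * σs ^ 2 + (n : ℝ) / (N + n) * σt2hat ω)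
      = N / (N + n) * σs ^ 2 + ((n : ℝ) - 1) / (N + n) * σt ^ 2 := by
    rw [integral_const_add_mul (hσL2.integrable one_le_two), hσmean]
    field_simp
  have hσbar : MemLp (fun ω ↦ N / (N + n) * σs ^ 2 + (n : ℝ) / (N + n) * σt2hat ω) 2 ℙ :=
    (memLp_const (N / (N + n) * σs ^ 2)).add (hσL2.const_mul ((n : ℝ) / (N + n)))
  have hμbar : MemLp (fun ω ↦ N / (N + n) * μs + (n : ℝ) / (N + n) * μthat ω) 2 ℙ :=
    (memLp_const (N / (N + n) * μs)).add (hμL2.const_mul ((n : ℝ) / (N + n)))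
  refine (integral_gaussian_wasserstein_sq_le hσt.le (by positivity) hσbar hμbar
    hσbar_floor).trans_eq ?_
  rw [hmean, integral_const_add_mul (hμL2.integrable one_le_two), hμmean,
    variance_const_add_mul hμL2.aestronglyMeasurable, hμvar,
    variance_const_add_mul hσL2.aestronglyMeasurable, hσvar]
  field_simp
  ring

/-- Upper bound of Proposition 1: the expected squared Wasserstein-2 distance
between the Gaussian with interpolated statistics `(μ̄, σ̄²)` and the Gaussian
with target statistics `(μ_t, σ_t²)` is bounded above by `U(N, n, q)`, where
`q` plays the role of the left-tail chi-square quantile. -/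
theorem wasserstein_expected_upper_bound
    {Ω : Type*} [MeasureSpace Ω] [IsProbabilityMeasure (ℙ : Measure Ω)]
    (μs μt σs σt N q : ℝ) (n : ℕ)
    (hσs : 0 < σs) (hσt : 0 < σt) (hn : 2 ≤ n) (hN : 0 ≤ N) (hq : 0 < q)
    (μthat σt2hat : Ω → ℝ)
    (hμL2 : MemLp μthat 2 ℙ)
    (hμmean : ∫ ω, μthat ω = μt)
    (hμvar : variance μthat ℙ = σt ^ 2 / n)
    (hσL2 : MemLp σt2hat 2 ℙ)
    (hσmean : ∫ ω, σt2hat ω = (((n : ℝ) - 1) / n) * σt ^ 2)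
    (hσvar : variance σt2hat ℙ = (2 * ((n : ℝ) - 1) / (n : ℝ) ^ 2) * σt ^ 4)
    (hσlb : ∀ᵐ ω ∂(ℙ : Measure Ω), q * σt ^ 2 / n ≤ σt2hat ω) :
    ∫ ω,
        (σt ^ 2 + (N / (N + n) * σs ^ 2 + (n : ℝ) / (N + n) * σt2hat ω)
          - 2 * Real.sqrt (N / (N + n) * σs ^ 2 + (n : ℝ) / (N + n) * σt2hat ω) * σt
          + ((N / (N + n) * μs + (n : ℝ) / (N + n) * μthat ω) - μt) ^ 2)
      ≤ (σt - Real.sqrt (N / (N + n) * σs ^ 2 + ((n : ℝ) - 1) / (N + n) * σt ^ 2)) ^ 2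
          + (N / (N + n)) ^ 2 * (μt - μs) ^ 2 + (n : ℝ) / (N + n) ^ 2 * σt ^ 2
        + σt ^ 5 * (((n : ℝ) - 1) / (2 * (N + n) ^ 2))
          * (N / (N + n) * σs ^ 2 + q / (N + n) * σt ^ 2) ^ (-(3 : ℝ) / 2) :=
  wasserstein_expected_upper_bound_general μs μt σs σt N q n hσt hn hN hq μthat σt2hat hμL2 hμmean
    hμvar hσL2 hσmean hσvar hσlb
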